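/- arXiv:2212.14814 — 2 statements merged into one kernel-verified Lean document; each statement's English description precedes it below -/
import Mathlib

section
/- Let G be a graph admitting a cograph edit of size at most k, and let X be a t-module of G with |X| > k + t. Then every minimum-size cograph edit S of G satisfies |S ∩ δ(X)| ≤ t, i.e., the budget of X is at most t. -/
/-- `X` is a module of `G`: every vertex outside `X` is adjacent to all of `X` or none of `X`. -/
def IsModule {V : Type*} (G : SimpleGraph V) (X : Set V) : Prop :=
  ∀ x ∈ X, ∀ y ∈ X, ∀ v, v ∉ X → (G.Adj v x ↔ G.Adj v y)

/-- `a,b,c,d` form an induced path on four vertices in `G`. -/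
def IsInducedP4 {V : Type*} (G : SimpleGraph V) (a b c d : V) : Prop :=
  a ≠ b ∧ a ≠ c ∧ a ≠ d ∧ b ≠ c ∧ b ≠ d ∧ c ≠ d ∧
  G.Adj a b ∧ G.Adj b c ∧ G.Adj c d ∧ ¬ G.Adj a c ∧ ¬ G.Adj a d ∧ ¬ G.Adj b d

/-- A cograph is a graph with no induced `P₄`. -/
def IsCograph {V : Type*} (G : SimpleGraph V) : Prop :=
  ∀ a b c d, ¬ IsInducedP4 G a b c d

/-- The edit of `G` by a set `S` of (unordered) pairs: the adjacency is flipped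
exactly on the pairs of `S`. -/
def editGraph {V : Type*} (G : SimpleGraph V) (S : Set (Sym2 V)) : SimpleGraph V where
  Adj x y := x ≠ y ∧ ((G.Adj x y ∧ s(x,y) ∉ S) ∨ (¬ G.Adj x y ∧ s(x,y) ∈ S))
  symm := by
    constructor
    intro x y h
    refine ⟨h.1.symm, ?_⟩
    rw [Sym2.eq_swap]
    rcases h.2 with ⟨ha, hs⟩ | ⟨ha, hs⟩
    · exact Or.inl ⟨ha.symm, hs⟩
    · exact Or.inr ⟨fun hadj => ha hadj.symm, hs⟩
  loopless := ⟨fun x h => h.1 rfl⟩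

/-- `δ(X)`: the set of pairs with exactly one endpoint in `X`. -/
def cutPairs {V : Type*} (X : Set V) : Set (Sym2 V) :=
  {e | ∃ x y, e = s(x,y) ∧ x ∈ X ∧ y ∉ X}

/-- `X` is a `t`-module of `G`: editing at most `t` pairs of its cut makes it a module. -/
def IsTModule {V : Type*} (G : SimpleGraph V) (t : ℕ) (X : Set V) : Prop :=
  ∃ T ⊆ cutPairs X, T.ncard ≤ t ∧ IsModule (editGraph G T) X

/-- `M` is (the vertex set of) a connected component of `G`. -/
def IsCC {V : Type*} (G : SimpleGraph V) (M : Set V) : Prop :=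
  ∃ x, M = {y | G.Reachable x y}

/-- A comodule: a module which is a connected component of `G` or of its complement. -/
def IsComodule {V : Type*} (G : SimpleGraph V) (M : Set V) : Prop :=
  IsModule G M ∧ (IsCC G M ∨ IsCC Gᶜ M)

/-- A strong module: a module comparable with every module it meets. -/
def IsStrongModule {V : Type*} (G : SimpleGraph V) (M : Set V) : Prop :=
  IsModule G M ∧ ∀ M', IsModule G M' → (M ∩ M').Nonempty → M ⊆ M' ∨ M' ⊆ M

/-
Proof idea: a minimum edit `S` has at most `k` pairs, so together with a witness `T` of the
`t`-module property it touches fewer than `|X|` vertices of `X` through `δ(X)`; pick an untouched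
`x₀ ∈ X`. Replacing the pairs of `S` in `δ(X)` by `T` gives an edit in which `X` is a module whose
neighbourhood outside `X` is that of `x₀` in the `S`-edit, while nothing else changes. Substituting
a module for a vertex cannot create an induced `P₄`, because a module meets an induced `P₄` in at
most one vertex or in all four. So the new edit is a cograph edit, and minimality of `S` gives
`|S ∩ δ(X)| ≤ |T| ≤ t`.
-/

section InducedP4

variable {V W : Type*} {G : SimpleGraph V} {a b c d : V}

theorem isInducedP4_iff :
    IsInducedP4 G a b c d ↔
      G.Adj a b ∧ G.Adj b c ∧ G.Adj c d ∧ ¬ G.Adj a c ∧ ¬ G.Adj a d ∧ ¬ G.Adj b d := by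
  refine ⟨fun h => h.2.2.2.2.2.2, fun ⟨hab, hbc, hcd, hac, had, hbd⟩ => ?_⟩
  refine ⟨hab.ne, ?_, ?_, hbc.ne, ?_, hcd.ne, hab, hbc, hcd, hac, had, hbd⟩
  · rintro rfl; exact had hcd
  · rintro rfl; exact hac hcd.symm
  · rintro rfl; exact had hab

theorem IsInducedP4.map {G' : SimpleGraph W} (h : IsInducedP4 G a b c d) (f : V → W)
    (hf : ∀ u ∈ ({a, b, c, d} : Set V), ∀ w ∈ ({a, b, c, d} : Set V), u ≠ w →
      (G'.Adj (f u) (f w) ↔ G.Adj u w)) :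
    IsInducedP4 G' (f a) (f b) (f c) (f d) := by
  obtain ⟨hab, hac, had, hbc, hbd, hcd, hadj⟩ := h
  rw [isInducedP4_iff, hf a (by simp) b (by simp) hab, hf b (by simp) c (by simp) hbc,
    hf c (by simp) d (by simp) hcd, hf a (by simp) c (by simp) hac,
    hf a (by simp) d (by simp) had, hf b (by simp) d (by simp) hbd]
  exact hadj

theorem IsModule.mem_of_adj_of_not_adj {X : Set V} (hX : IsModule G X) {v y z : V}
    (hy : y ∈ X) (hz : z ∈ X) (hvy : G.Adj v y) (hvz : ¬ G.Adj v z) : v ∈ X :=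
  by_contra fun hv => hvz ((hX y hy z hz v hv).mp hvy)

/-- `P₄` is a prime graph. -/
theorem IsInducedP4.subset_of_isModule {X : Set V} (h : IsInducedP4 G a b c d)
    (hX : IsModule G X) {u w : V} (hu : u ∈ ({a, b, c, d} : Set V))
    (hw : w ∈ ({a, b, c, d} : Set V)) (huw : u ≠ w) (huX : u ∈ X) (hwX : w ∈ X) :
    ({a, b, c, d} : Set V) ⊆ X := by
  obtain ⟨hc_ab, hd_ac, hb_ad, hc_ad, ha_bc, ha_bd, hb_cd⟩ :
      (a ∈ X → b ∈ X → c ∈ X) ∧ (a ∈ X → c ∈ X → d ∈ X) ∧ (a ∈ X → d ∈ X → b ∈ X) ∧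
      (a ∈ X → d ∈ X → c ∈ X) ∧ (b ∈ X → c ∈ X → a ∈ X) ∧ (b ∈ X → d ∈ X → a ∈ X) ∧
      (c ∈ X → d ∈ X → b ∈ X) := by
    obtain ⟨-, -, -, -, -, -, hab, hbc, hcd, hac, had, hbd⟩ := h
    refine ⟨fun ha hb => ?_, fun ha hc => ?_, fun ha hd => ?_, fun ha hd => ?_, fun hb hc => ?_,
      fun hb hd => ?_, fun hc hd => ?_⟩
    · exact hX.mem_of_adj_of_not_adj hb ha hbc.symm (hac ·.symm)
    · exact hX.mem_of_adj_of_not_adj hc ha hcd.symm (had ·.symm)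
    · exact hX.mem_of_adj_of_not_adj ha hd hab.symm hbd
    · exact hX.mem_of_adj_of_not_adj hd ha hcd (hac ·.symm)
    · exact hX.mem_of_adj_of_not_adj hb hc hab hac
    · exact hX.mem_of_adj_of_not_adj hb hd hab had
    · exact hX.mem_of_adj_of_not_adj hc hd hbc hbd
  suffices hXad : a ∈ X ∧ d ∈ X by
    simp only [Set.insert_subset_iff, Set.singleton_subset_iff]
    exact ⟨hXad.1, hb_ad hXad.1 hXad.2, hc_ad hXad.1 hXad.2, hXad.2⟩
  clear h hX hb_ad hc_ad
  simp only [Set.mem_insert_iff, Set.mem_singleton_iff] at hu hw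
  rcases hu with rfl | rfl | rfl | rfl <;> rcases hw with rfl | rfl | rfl | rfl <;>
    first | exact absurd rfl huw | skip
  all_goals tauto

end InducedP4

theorem IsCograph.of_isModule_copying {V : Type*} {H H' : SimpleGraph V} (hH : IsCograph H)
    {X : Set V} {x₀ : V} (hside : ∀ u w, (u ∈ X ↔ w ∈ X) → (H'.Adj u w ↔ H.Adj u w))
    (hcut : ∀ v ∉ X, ∀ y ∈ X, H'.Adj v y ↔ H.Adj v x₀) :
    IsCograph H' := by
  classical
  intro a b c d hP
  have hmod : IsModule H' X := fun y hy z hz v hv =>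
    (hcut v hv y hy).trans (hcut v hv z hz).symm
  by_cases hall : ({a, b, c, d} : Set V) ⊆ X
  · exact hH a b c d <| hP.map id fun u hu w hw _ =>
      (hside u w (iff_of_true (hall hu) (hall hw))).symm
  -- collapse `X` onto `x₀`; the `P₄` has at most one vertex in `X`
  refine hH _ _ _ _ (hP.map (fun u => if u ∈ X then x₀ else u) fun u hu w hw huw => ?_)
  have hnot : ¬ (u ∈ X ∧ w ∈ X) := fun ⟨huX, hwX⟩ =>
    hall (hP.subset_of_isModule hmod hu hw huw huX hwX)
  by_cases huX : u ∈ X <;> by_cases hwX : w ∈ X <;> simp only [huX, hwX, if_true, if_false]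
  · exact absurd ⟨huX, hwX⟩ hnot
  · rw [H.adj_comm, H'.adj_comm, hcut w hwX u huX]
  · exact (hcut u huX w hwX).symm
  · exact (hside u w (iff_of_false huX hwX)).symm

section Edit

variable {V : Type*} {G : SimpleGraph V}

theorem editGraph_adj_congr {S S' : Set (Sym2 V)} {u w : V} (h : s(u, w) ∈ S ↔ s(u, w) ∈ S') :
    (editGraph G S).Adj u w ↔ (editGraph G S').Adj u w := by
  change _ ∧ _ ↔ _ ∧ _
  rw [h]

theorem editGraph_adj_of_notMem {S : Set (Sym2 V)} {u w : V} (huw : u ≠ w) (h : s(u, w) ∉ S) :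
    (editGraph G S).Adj u w ↔ G.Adj u w := by
  change _ ∧ _ ↔ _
  tauto

theorem mem_cutPairs {X : Set V} {x y : V} :
    s(x, y) ∈ cutPairs X ↔ (x ∈ X ∧ y ∉ X) ∨ (y ∈ X ∧ x ∉ X) := by
  constructor
  · rintro ⟨a, b, he, ha, hb⟩
    rcases Sym2.eq_iff.mp he with ⟨rfl, rfl⟩ | ⟨rfl, rfl⟩
    exacts [Or.inl ⟨ha, hb⟩, Or.inr ⟨ha, hb⟩]
  · rintro (⟨hx, hy⟩ | ⟨hy, hx⟩)
    exacts [⟨x, y, rfl, hx, hy⟩, ⟨y, x, Sym2.eq_swap, hy, hx⟩]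

/-- Each pair of `δ(X)` has one endpoint in `X`, so fewer than `|X|` of them miss a vertex. -/
theorem exists_mem_forall_notMem_of_ncard_lt {X : Set V} {P : Set (Sym2 V)}
    (hP : P ⊆ cutPairs X) (hPfin : P.Finite) (hlt : P.ncard < X.ncard) :
    ∃ x ∈ X, ∀ e ∈ P, x ∉ e := by
  by_contra! hcover
  have hXfin : X.Finite := Set.finite_of_ncard_pos (by omega)
  rw [Set.ncard_eq_toFinset_card _ hPfin, Set.ncard_eq_toFinset_card _ hXfin] at hlt
  refine hlt.not_ge (Finset.card_le_card_of_forall_subsingleton (· ∈ ·) (fun x hx => ?_)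
    fun e he => ?_)
  · simpa using hcover x (by simpa using hx)
  · obtain ⟨a, b, rfl, ha, hb⟩ := hP (by simpa using he)
    have hmem : ∀ x ∈ X, x ∈ s(a, b) → x = a := fun x hx hxe => by
      rcases Sym2.mem_iff.mp hxe with rfl | rfl
      exacts [rfl, absurd hx hb]
    rintro x ⟨hx, hxe⟩ y ⟨hy, hye⟩
    rw [hmem x (by simpa using hx) hxe, hmem y (by simpa using hy) hye]

theorem IsCograph.editGraph_sdiff_cutPairs_union {S T : Set (Sym2 V)} {X : Set V} {x₀ : V}
    (hS : IsCograph (editGraph G S)) (hT : T ⊆ cutPairs X) (hmod : IsModule (editGraph G T) X)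
    (hx₀X : x₀ ∈ X) (hx₀ : ∀ e ∈ T ∪ S ∩ cutPairs X, x₀ ∉ e) :
    IsCograph (editGraph G (S \ cutPairs X ∪ T)) := by
  refine hS.of_isModule_copying (X := X) (x₀ := x₀) (fun u w huw => editGraph_adj_congr ?_)
    fun v hv y hy => ?_
  · have hcut : s(u, w) ∉ cutPairs X := by rw [mem_cutPairs]; tauto
    simp only [Set.mem_union, Set.mem_sdiff, hcut, not_false_eq_true, and_true,
      or_iff_left fun h => hcut (hT h)]
  · have hvy : s(v, y) ∈ cutPairs X := mem_cutPairs.mpr (Or.inr ⟨hy, hv⟩)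
    have hvx₀ : s(v, x₀) ∈ cutPairs X := mem_cutPairs.mpr (Or.inr ⟨hx₀X, hv⟩)
    have hne : v ≠ x₀ := ne_of_mem_of_not_mem hx₀X hv |>.symm
    calc (editGraph G (S \ cutPairs X ∪ T)).Adj v y
        ↔ (editGraph G T).Adj v y := editGraph_adj_congr (by simp [hvy])
      _ ↔ (editGraph G T).Adj v x₀ := hmod y hy x₀ hx₀X v hv
      _ ↔ G.Adj v x₀ :=
        editGraph_adj_of_notMem hne fun h => hx₀ _ (Or.inl h) (Sym2.mem_mk_right _ _)
      _ ↔ (editGraph G S).Adj v x₀ := (editGraph_adj_of_notMem hne fun h =>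
        hx₀ _ (Or.inr ⟨h, hvx₀⟩) (Sym2.mem_mk_right _ _)).symm

end Edit

/-- if `G` admits a cograph edit of size at most `k` and `X` is a
`t`-module of `G` with `|X| > k + t`, then every minimum cograph edit `S` of `G`
satisfies `|S ∩ δ(X)| ≤ t` (the budget of `X` is at most `t`). -/
theorem tmodule_budget {V : Type*} [Fintype V] (G : SimpleGraph V) (k t : ℕ)
    (X : Set V)
    (hedit : ∃ S0 : Set (Sym2 V), IsCograph (editGraph G S0) ∧ S0.ncard ≤ k)
    (hX : IsTModule G t X) (hsize : k + t < X.ncard)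
    (S : Set (Sym2 V)) (hS : IsCograph (editGraph G S))
    (hmin : ∀ S', IsCograph (editGraph G S') → S.ncard ≤ S'.ncard) :
    (S ∩ cutPairs X).ncard ≤ t := by
  obtain ⟨S0, hS0, hS0k⟩ := hedit
  obtain ⟨T, hTcut, hTt, hTmod⟩ := hX
  have hSk : S.ncard ≤ k := (hmin S0 hS0).trans hS0k
  have hSsplit := Set.ncard_inter_add_ncard_sdiff_eq_ncard S (cutPairs X) (Set.toFinite S)
  obtain ⟨x₀, hx₀X, hx₀⟩ := exists_mem_forall_notMem_of_ncard_lt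
    (Set.union_subset hTcut Set.inter_subset_right) (Set.toFinite _) <|
    calc (T ∪ S ∩ cutPairs X).ncard ≤ T.ncard + (S ∩ cutPairs X).ncard := Set.ncard_union_le _ _
      _ < X.ncard := by omega
  have hexchange := hmin _ (hS.editGraph_sdiff_cutPairs_union hTcut hTmod hx₀X hx₀)
  have hS'card := Set.ncard_union_le (S \ cutPairs X) T
  omega
end

section
/- Let H be a cograph with cotree T, and S a set of edited pairs with |S| ≤ k giving graph G. Suppose G is reduced under the three reduction rules (no cograph comodule, no independent-set module of size > k+1, every module containing an edge is a comodule). Let T' be the subtree of T induced by nodes u with |De(u)| ≥ k+2, where De(u) is the set of leaf-descendants of u, and n = |V(G)| ≥ k+2. Then T' has at least n/(k+1) − 2k nodes. -/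
/-- `a` is the parent of `b` in the rooted forest given by the parent map `par`. -/
def parentRel {V : Type*} (par : V → Option V) (a b : V) : Prop := par b = some a

/-- `a` is an ancestor of `b` (reflexively). -/
def Anc {V : Type*} (par : V → Option V) (a b : V) : Prop :=
  Relation.ReflTransGen (parentRel par) a b

/-- The parent map has no cycles, so it defines a rooted forest. -/
def ParAcyclic {V : Type*} (par : V → Option V) : Prop :=
  ∀ v, ¬ Relation.TransGen (parentRel par) v v

/-- The edges of the forest, each edge being identified with its lower (child) endpoint. -/
def forestEdges {V : Type*} (par : V → Option V) : Set V := {v | par v ≠ none}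

/-- A descending path, recorded as a pair (top endpoint, bottom endpoint). -/
def IsDescPath {V : Type*} (par : V → Option V) (P : V × V) : Prop := Anc par P.1 P.2

/-- The edge set of a descending path `P = (top, bot)`: the edges (identified with their
child endpoints) lying strictly below `top` and weakly above `bot`. -/
def dpEdges {V : Type*} (par : V → Option V) (P : V × V) : Set V :=
  {v | Anc par P.1 v ∧ v ≠ P.1 ∧ Anc par v P.2}

/-- `Q` is a (descending) subpath of the descending path `P`. -/
def IsSubpath {V : Type*} (par : V → Option V) (P Q : V × V) : Prop :=
  Anc par P.1 Q.1 ∧ Anc par Q.1 Q.2 ∧ Anc par Q.2 P.2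
/-- `a` is the least common ancestor of `u` and `v`. -/
def IsLCA {N : Type*} (par : N → Option N) (a u v : N) : Prop :=
  Anc par a u ∧ Anc par a v ∧ ∀ b, Anc par b u → Anc par b v → Anc par b a

/-- `(par, ι, lab)` is a cotree for the cograph `H`: a rooted tree whose leaves are the
vertices of `H` (via `ι`), whose internal nodes are labelled `⊕` (`true`) or `+` (`false`)
with alternating labels and at least two children, and where two vertices are adjacent
iff their least common ancestor is labelled `⊕`. -/
structure IsCotree {V N : Type*} (H : SimpleGraph V) (par : N → Option N)
    (ι : V → N) (lab : N → Bool) : Prop where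
  inj : Function.Injective ι
  acyclic : ParAcyclic par
  rooted : ∃ r, ∀ n, Anc par r n
  leaf_childless : ∀ n v, par n ≠ some (ι v)
  leaves_are_vertices : ∀ n, ({m | par m = some n} = ∅) → ∃ v, n = ι v
  internal_children : ∀ n, (∀ v, n ≠ ι v) → 2 ≤ {m | par m = some n}.ncard
  alternating : ∀ m n, par m = some n → (∃ v, m = ι v) ∨ lab m ≠ lab n
  adj_iff : ∀ x y, x ≠ y → ∀ a, IsLCA par a (ι x) (ι y) → (H.Adj x y ↔ lab a = true)

/-- The leaf-descendants of a node `u`, seen as a set of vertices of the graph. -/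
def De {V N : Type*} (par : N → Option N) (ι : V → N) (u : N) : Set V :=
  {x | Anc par u (ι x)}


/-!
Let `T'` be the set of cotree nodes with at least `k + 2` leaves below them. It contains the root
and no leaf, so every leaf lies below a unique topmost node outside `T'`, a *boundary child*,
whose subtree has at most `k + 1` leaves. For `u ∈ T'`, the leaves below the children of `u` whose
subtree avoids the edited vertices form a module of `H` that the edition does not touch, hence a
module of `G`. By the reduction rules it is independent: an edge would make it a comodule, which
contains a `P₄` of `G`, and that `P₄` would already be one of the cograph `H`. So it has at most
`k + 1` vertices. Every other leaf lies below the boundary child above one of the at most `2k`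
edited vertices. Hence `n ≤ (k + 1) |T'| + 2k (k + 1)`.
-/

open Set Relation

section Forest

variable {N : Type*} {par : N → Option N}

lemma anc_of_parent {u c : N} (h : par c = some u) : Anc par u c :=
  ReflTransGen.single h

lemma Anc.eq_or_anc_of_parent {b n m : N} (h : Anc par b n) (hm : par n = some m) :
    b = n ∨ Anc par b m := by
  rcases h.cases_tail with h | ⟨c, hbc, hcn⟩
  · exact Or.inl h.symm
  · have hcm : c = m := Option.some_inj.mp (hcn.symm.trans hm)
    exact Or.inr (hcm ▸ hbc)

lemma Anc.total {a b n : N} (ha : Anc par a n) (hb : Anc par b n) :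
    Anc par a b ∨ Anc par b a := by
  have hunique : Relator.RightUnique (Function.swap (parentRel par)) :=
    fun _ _ _ h h' => Option.some_inj.mp (h.symm.trans h')
  rcases ReflTransGen.total_of_right_unique hunique (reflTransGen_swap.mpr ha)
    (reflTransGen_swap.mpr hb) with h | h
  · exact Or.inr (reflTransGen_swap.mp h)
  · exact Or.inl (reflTransGen_swap.mp h)

lemma not_anc_of_parent (hac : ParAcyclic par) {u c : N} (hc : par c = some u) :
    ¬ Anc par c u :=
  fun h => hac c (TransGen.tail' h hc)

lemma Anc.antisymm (hac : ParAcyclic par) {a b : N} (hab : Anc par a b) (hba : Anc par b a) :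
    a = b := by
  rcases hab.cases_tail with h | ⟨c, hab', hcb⟩
  · exact h.symm
  · exact absurd (TransGen.tail' (hba.trans hab') hcb) (hac b)

lemma finite_setOf_anc {r : N} (hr : ∀ n, Anc par r n) (hac : ParAcyclic par) (n : N) :
    {b | Anc par b n}.Finite := by
  induction hr n with
  | refl => exact (finite_singleton r).subset fun b hb => hb.antisymm hac (hr b)
  | @tail b c _ hbc ih =>
    refine (ih.insert c).subset fun x hx => ?_
    rcases hx.eq_or_anc_of_parent hbc with rfl | hx
    · exact mem_insert _ _
    · exact mem_insert_of_mem _ hx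

lemma exists_isLCA {r : N} (hr : ∀ n, Anc par r n) (u v : N) : ∃ a, IsLCA par a v u := by
  induction hr v with
  | refl => exact ⟨r, .refl, hr u, fun _ hb _ => hb⟩
  | @tail b c _ hbc ih =>
    by_cases hcu : Anc par c u
    · exact ⟨c, .refl, hcu, fun _ hb _ => hb⟩
    obtain ⟨a, hab, hau, hmax⟩ := ih
    refine ⟨a, hab.tail hbc, hau, fun d hdc hdu => ?_⟩
    rcases hdc.eq_or_anc_of_parent hbc with rfl | hdb
    · exact absurd hdu hcu
    · exact hmax d hdb hdu

lemma IsLCA.of_not_anc {a u v z : N} (h : IsLCA par a v u) (hvu : ¬ Anc par u v)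
    (huz : Anc par u z) : IsLCA par a v z := by
  obtain ⟨hav, hau, hmax⟩ := h
  refine ⟨hav, hau.trans huz, fun b hbv hbz => ?_⟩
  rcases hbz.total huz with hbu | hub
  · exact hmax b hbv hbu
  · exact absurd (hub.trans hbv) hvu

def IsBoundaryChild (par : N → Option N) (T : Set N) (c : N) : Prop :=
  c ∉ T ∧ ∃ u ∈ T, par c = some u

lemma exists_isBoundaryChild_anc {T : Set N} {r n : N} (hr : ∀ n, Anc par r n) (hrT : r ∈ T)
    (hn : n ∉ T) : ∃ c, IsBoundaryChild par T c ∧ Anc par c n := by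
  induction hr n with
  | refl => exact absurd hrT hn
  | @tail b c _ hbc ih =>
    by_cases hb : b ∈ T
    · exact ⟨c, ⟨hn, b, hb, hbc⟩, .refl⟩
    · obtain ⟨c', hc', hc'b⟩ := ih hb
      exact ⟨c', hc', hc'b.tail hbc⟩

lemma IsBoundaryChild.eq_of_anc {T : Set N} (hT : ∀ a b, Anc par a b → b ∈ T → a ∈ T)
    {c c' n : N} (hc : IsBoundaryChild par T c) (hc' : IsBoundaryChild par T c')
    (hcn : Anc par c n) (hc'n : Anc par c' n) : c = c' := by
  obtain ⟨hcT, u, huT, hu⟩ := hc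
  obtain ⟨hc'T, u', hu'T, hu'⟩ := hc'
  rcases hcn.total hc'n with h | h
  · rcases h.eq_or_anc_of_parent hu' with h | h
    · exact h
    · exact absurd (hT _ _ h hu'T) hcT
  · rcases h.eq_or_anc_of_parent hu with h | h
    · exact h.symm
    · exact absurd (hT _ _ h huT) hc'T

lemma eq_of_parent_eq_of_anc (hac : ParAcyclic par) {u c c' n : N} (hc : par c = some u)
    (hc' : par c' = some u) (hcn : Anc par c n) (hc'n : Anc par c' n) : c = c' :=
  IsBoundaryChild.eq_of_anc (T := {b | Anc par b u}) (fun _ _ hab hb => hab.trans hb)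
    ⟨not_anc_of_parent hac hc, u, .refl, hc⟩ ⟨not_anc_of_parent hac hc', u, .refl, hc'⟩ hcn hc'n

lemma isLCA_of_ne_of_parent_eq (hac : ParAcyclic par) {u c c' v z : N} (hc : par c = some u)
    (hc' : par c' = some u) (hne : c ≠ c') (hcv : Anc par c v) (hc'z : Anc par c' z) :
    IsLCA par u v z := by
  have huz : Anc par u z := (anc_of_parent hc').trans hc'z
  refine ⟨(anc_of_parent hc).trans hcv, huz, fun b hbv hbz => ?_⟩
  rcases hbz.total huz with hbu | hub
  · exact hbu
  rcases hub.cases_head with rfl | ⟨d, hd, hdb⟩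
  · exact .refl
  · exact absurd ((eq_of_parent_eq_of_anc hac hd hc (hdb.trans hbv) hcv).symm.trans
      (eq_of_parent_eq_of_anc hac hd hc' (hdb.trans hbz) hc'z)) hne

end Forest

lemma Set.ncard_biUnion_le_mul {α β : Type*} {t : Set α} (ht : t.Finite) {s : α → Set β} {m : ℕ}
    (hs : ∀ i ∈ t, (s i).ncard ≤ m) : (⋃ i ∈ t, s i).ncard ≤ t.ncard * m := by
  calc (⋃ i ∈ t, s i).ncard ≤ ∑ i ∈ ht.toFinset, (s i).ncard := by
        simpa using ht.toFinset.set_ncard_biUnion_le s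
    _ ≤ ht.toFinset.card * m := Finset.sum_le_card_nsmul _ _ _ fun i hi => hs i (by simpa using hi)
    _ = t.ncard * m := by rw [ncard_eq_toFinset_card t ht]

section Cotree

variable {V N : Type*} {par : N → Option N} {ι : V → N}

lemma De_anti {a b : N} (hab : Anc par a b) : De par ι b ⊆ De par ι a :=
  fun _ hx => hab.trans hx

def cleanLeaves (par : N → Option N) (ι : V → N) (R : Set V) (u : N) : Set V :=
  ⋃ c ∈ {c | par c = some u ∧ Disjoint (De par ι c) R}, De par ι c

lemma disjoint_cleanLeaves (R : Set V) (u : N) : Disjoint (cleanLeaves par ι R u) R := by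
  simp only [cleanLeaves, disjoint_iUnion_left]
  exact fun _ hc => hc.2

lemma natCard_le_of_boundary [Finite V] {T : Set N} {R : Set V} {m : ℕ} {r : N}
    (hr : ∀ n, Anc par r n) (hrT : r ∈ T) (hT : ∀ a b, Anc par a b → b ∈ T → a ∈ T)
    (hTfin : T.Finite) (hleaf : ∀ x, ι x ∉ T) (hsmall : ∀ c ∉ T, (De par ι c).ncard ≤ m)
    (hclean : ∀ u, (cleanLeaves par ι R u).ncard ≤ m) :
    Nat.card V ≤ T.ncard * m + R.ncard * m := by
  choose b hb hbx using fun x => exists_isBoundaryChild_anc hr hrT (hleaf x)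
  have hcover : (univ : Set V) ⊆
      (⋃ u ∈ T, cleanLeaves par ι R u) ∪ ⋃ y ∈ R, De par ι (b y) := by
    intro x _
    obtain ⟨-, u, huT, hbu⟩ := hb x
    by_cases hR : Disjoint (De par ι (b x)) R
    · exact Or.inl (mem_biUnion huT (mem_biUnion (x := b x) ⟨hbu, hR⟩ (hbx x)))
    · obtain ⟨y, hyb, hyR⟩ := not_disjoint_iff.mp hR
      have hbxy : b x = b y := (hb x).eq_of_anc hT (hb y) hyb (hbx y)
      exact Or.inr (mem_biUnion hyR (hbxy ▸ hbx x))
  calc Nat.card V = (univ : Set V).ncard := ncard_univ V |>.symm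
    _ ≤ _ := ncard_le_ncard hcover (toFinite _)
    _ ≤ _ := ncard_union_le _ _
    _ ≤ T.ncard * m + R.ncard * m :=
      add_le_add (ncard_biUnion_le_mul hTfin fun u _ => hclean u)
        (ncard_biUnion_le_mul (toFinite R) fun y _ => hsmall _ (hb y).1)

variable {H : SimpleGraph V} {lab : N → Bool}

lemma IsCotree.De_leaf (hT : IsCotree H par ι lab) (x : V) : De par ι (ι x) = {x} := by
  refine eq_singleton_iff_unique_mem.mpr ⟨.refl, fun y hy => ?_⟩
  rcases hy.cases_head with h | ⟨c, hc, _⟩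
  · exact (hT.inj h).symm
  · exact absurd hc (hT.leaf_childless c x)

lemma IsCotree.finite_setOf_De_nonempty [Finite V] (hT : IsCotree H par ι lab) :
    {u | (De par ι u).Nonempty}.Finite := by
  obtain ⟨r, hr⟩ := hT.rooted
  refine (finite_iUnion fun x => finite_setOf_anc hr hT.acyclic (ι x)).subset ?_
  rintro u ⟨x, hx⟩
  exact mem_iUnion.mpr ⟨x, hx⟩

lemma IsCotree.isModule_biUnion_De (hT : IsCotree H par ι lab) {u : N} {C : Set N}
    (hC : ∀ c ∈ C, par c = some u) : IsModule H (⋃ c ∈ C, De par ι c) := by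
  intro x hx y hy v hv
  obtain ⟨cx, hcx, hxd⟩ := mem_iUnion₂.mp hx
  obtain ⟨cy, hcy, hyd⟩ := mem_iUnion₂.mp hy
  suffices ∃ a, IsLCA par a (ι v) (ι x) ∧ IsLCA par a (ι v) (ι y) by
    obtain ⟨a, hax, hay⟩ := this
    rw [hT.adj_iff v x (ne_of_mem_of_not_mem hx hv).symm a hax,
      hT.adj_iff v y (ne_of_mem_of_not_mem hy hv).symm a hay]
  by_cases hvu : Anc par u (ι v)
  · rcases hvu.cases_head with h | ⟨cv, hcv, hvd⟩
    · exact absurd (h ▸ hC cx hcx) (hT.leaf_childless cx v)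
    have hcvC : cv ∉ C := fun h => hv (mem_biUnion h hvd)
    exact ⟨u, isLCA_of_ne_of_parent_eq hT.acyclic hcv (hC cx hcx)
        (ne_of_mem_of_not_mem hcx hcvC).symm hvd hxd,
      isLCA_of_ne_of_parent_eq hT.acyclic hcv (hC cy hcy)
        (ne_of_mem_of_not_mem hcy hcvC).symm hvd hyd⟩
  · obtain ⟨r, hr⟩ := hT.rooted
    obtain ⟨a, ha⟩ := exists_isLCA hr u (ι v)
    exact ⟨a, ha.of_not_anc hvu ((anc_of_parent (hC cx hcx)).trans hxd),
      ha.of_not_anc hvu ((anc_of_parent (hC cy hcy)).trans hyd)⟩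

lemma IsCotree.natCard_le_of_ncard_cleanLeaves_le [Finite V] (hT : IsCotree H par ι lab)
    {R : Set V} {m : ℕ} (hm : 0 < m) (hV : m + 1 ≤ Nat.card V)
    (hclean : ∀ u, (cleanLeaves par ι R u).ncard ≤ m) :
    Nat.card V ≤ {u | m + 1 ≤ (De par ι u).ncard}.ncard * m + R.ncard * m := by
  obtain ⟨r, hr⟩ := hT.rooted
  refine natCard_le_of_boundary hr ?_ ?_ ?_ ?_ ?_ hclean
  · have hDe : De par ι r = univ := eq_univ_of_forall fun x => hr (ι x)
    simpa [hDe] using hV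
  · exact fun a b hab hb => hb.trans (ncard_le_ncard (De_anti hab) (toFinite _))
  · exact hT.finite_setOf_De_nonempty.subset fun u hu =>
      nonempty_of_ncard_ne_zero (by simp only [mem_ofPred_eq] at hu; omega)
  · intro x hx
    simp only [mem_ofPred_eq, hT.De_leaf, ncard_singleton] at hx
    omega
  · intro c hc
    simp only [mem_ofPred_eq, not_le] at hc
    omega

end Cotree

section Editing

variable {V : Type*}

def editedVertices (S : Set (Sym2 V)) : Set V := ⋃ e ∈ S, {x | x ∈ e}

lemma ncard_editedVertices_le [Finite V] (S : Set (Sym2 V)) :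
    (editedVertices S).ncard ≤ S.ncard * 2 := by
  refine ncard_biUnion_le_mul (toFinite S) fun e _ => ?_
  induction e using Sym2.ind with
  | _ a b =>
    have hab : {x : V | x ∈ s(a, b)} = {a, b} := by ext; simp
    exact hab ▸ (ncard_insert_le a {b}).trans (by simp)

lemma editGraph_adj_iff_of_notMem {H : SimpleGraph V} {S : Set (Sym2 V)} {x : V}
    (hx : x ∉ editedVertices S) (v : V) : (editGraph H S).Adj v x ↔ H.Adj v x := by
  have hvx : s(v, x) ∉ S := fun h => hx (mem_biUnion h (Sym2.mem_mk_right v x))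
  simp only [editGraph, hvx, not_false_eq_true, and_true, and_false, or_false]
  exact ⟨And.right, fun h => ⟨H.ne_of_adj h, h⟩⟩

variable {G H : SimpleGraph V} {M : Set V}

lemma IsModule.of_adj_iff (hM : IsModule H M) (hGH : ∀ q ∈ M, ∀ p, G.Adj p q ↔ H.Adj p q) :
    IsModule G M := fun x hx y hy v hv => by
  rw [hGH x hx, hGH y hy]
  exact hM x hx y hy v hv

lemma IsInducedP4.of_adj_iff (hGH : ∀ q ∈ M, ∀ p, G.Adj p q ↔ H.Adj p q) {a b c d : V}
    (h : IsInducedP4 G a b c d) (hb : b ∈ M) (hc : c ∈ M) (hd : d ∈ M) :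
    IsInducedP4 H a b c d := by
  simpa only [IsInducedP4, hGH b hb, hGH c hc, hGH d hd] using h

lemma not_adj_of_isModule_of_adj_iff (hH : IsCograph H)
    (h1 : ∀ M : Set V, IsComodule G M →
      ∃ a b c d, a ∈ M ∧ b ∈ M ∧ c ∈ M ∧ d ∈ M ∧ IsInducedP4 G a b c d)
    (h3 : ∀ M : Set V, IsModule G M → (∃ x ∈ M, ∃ y ∈ M, G.Adj x y) → IsComodule G M)
    (hM : IsModule G M) (hGH : ∀ q ∈ M, ∀ p, G.Adj p q ↔ H.Adj p q) :
    ∀ x ∈ M, ∀ y ∈ M, ¬ G.Adj x y := by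
  intro x hx y hy hxy
  obtain ⟨a, b, c, d, -, hb, hc, hd, hP4⟩ := h1 M (h3 M hM ⟨x, hx, y, hy, hxy⟩)
  exact hH a b c d (hP4.of_adj_iff hGH hb hc hd)

end Editing

/-- let `H` be a cograph with cotree `(par, ι, lab)`, and `G` the edit
of `H` by a set `S` of at most `k` pairs. If `G` is reduced under the three reduction
rules (no comodule induces a cograph, independent-set modules have size at most `k+1`,
modules containing an edge are comodules) and `n = |V| ≥ k + 2`, then the subtree `T'`
of the cotree induced by the nodes with at least `k+2` leaf-descendants has at least
`n/(k+1) − 2k` nodes. -/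
theorem size_of_Tprime {V N : Type*} [Fintype V] (H : SimpleGraph V)
    (par : N → Option N) (ι : V → N) (lab : N → Bool)
    (hT : IsCotree H par ι lab) (hH : IsCograph H)
    (S : Set (Sym2 V)) (k : ℕ) (hS : S.ncard ≤ k)
    (G : SimpleGraph V) (hG : G = editGraph H S)
    (h1 : ∀ M : Set V, IsComodule G M →
      ∃ a b c d, a ∈ M ∧ b ∈ M ∧ c ∈ M ∧ d ∈ M ∧ IsInducedP4 G a b c d)
    (h2 : ∀ M : Set V, IsModule G M → (∀ x ∈ M, ∀ y ∈ M, ¬ G.Adj x y) →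
      M.ncard ≤ k + 1)
    (h3 : ∀ M : Set V, IsModule G M → (∃ x ∈ M, ∃ y ∈ M, G.Adj x y) →
      IsComodule G M)
    (hn : k + 2 ≤ Fintype.card V) :
    (Fintype.card V : ℝ) / (k + 1) - 2 * k ≤
      (({u : N | k + 2 ≤ (De par ι u).ncard}).ncard : ℝ) := by
  subst hG
  set R := editedVertices S
  have hunedited : ∀ u, ∀ q ∈ cleanLeaves par ι R u, ∀ p, (editGraph H S).Adj p q ↔ H.Adj p q :=
    fun u _ hq => editGraph_adj_iff_of_notMem (disjoint_left.mp (disjoint_cleanLeaves R u) hq)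
  have hclean : ∀ u, (cleanLeaves par ι R u).ncard ≤ k + 1 := fun u => by
    have hM := (hT.isModule_biUnion_De fun _ hc => hc.1).of_adj_iff (hunedited u)
    exact h2 _ hM (not_adj_of_isModule_of_adj_iff hH h1 h3 hM (hunedited u))
  have hcount := hT.natCard_le_of_ncard_cleanLeaves_le k.succ_pos
    (by rw [Nat.card_eq_fintype_card]; exact hn) hclean
  have hR : R.ncard ≤ k * 2 := (ncard_editedVertices_le S).trans (by omega)
  have hreal : (Fintype.card V : ℝ) ≤
      {u : N | k + 2 ≤ (De par ι u).ncard}.ncard * (k + 1) + k * 2 * (k + 1) := by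
    rw [Nat.card_eq_fintype_card] at hcount
    exact_mod_cast hcount.trans (by gcongr)
  rw [sub_le_iff_le_add, div_le_iff₀ (by positivity)]
  linarith
end
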